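/- For real numbers α and β with α ≠ 1, the sequence (k² + αk + β)_{k=0}^∞ is not a Legendre multiplier sequence. -/

import Mathlib

open Polynomial

/-- A real polynomial is *hyperbolic* if all of its complex roots are real
(the zero polynomial and nonzero constants are vacuously hyperbolic). -/
def Hyperbolic (p : Polynomial ℝ) : Prop :=
  ∀ z ∈ (p.map (algebraMap ℝ ℂ)).roots, z.im = 0

/-- `γ` is a multiplier sequence for the simple set `q`: the linear operator
sending `q k` to `γ k • q k` maps hyperbolic polynomials to hyperbolic
polynomials.  (Since `q` is a simple set, every real polynomial has a unique
expansion `∑ a k • q k`, so this quantification over coefficient families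
expresses exactly that property.) -/
def IsMultiplierSeqFor (q : ℕ → Polynomial ℝ) (γ : ℕ → ℝ) : Prop :=
  ∀ (n : ℕ) (a : ℕ → ℝ),
    Hyperbolic (∑ k ∈ Finset.range n, C (a k) * q k) →
    Hyperbolic (∑ k ∈ Finset.range n, C (γ k * a k) * q k)

/-- The Legendre polynomials, via Rodrigues' formula
`Le n = (1/(2^n n!)) Dⁿ[(x²-1)ⁿ]`. -/
noncomputable def legendre (n : ℕ) : Polynomial ℝ :=
  C (1 / (2 ^ n * n.factorial : ℝ)) * derivative^[n] ((X ^ 2 - 1) ^ n)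

/-- A Legendre multiplier sequence. -/
def IsLegendreMS (γ : ℕ → ℝ) : Prop := IsMultiplierSeqFor legendre γ


/-!
A hyperbolic polynomial is a product of real linear factors, and Laguerre's inequality
`p(t) p''(t) ≤ p'(t)²` holds for linear factors and is preserved by products, because
`(pq)'² - pq(pq)'' = q²(p'² - pp'') + p²(q'² - qq'')`. Apply the multiplier sequence
`γₖ = k² + αk + β` to the hyperbolic polynomial `(x - 1)⁴ = ∑ₖ aₖ Leₖ`. Since
`Leₖ(1) = 1`, `Leₖ'(1) = k(k+1)/2` and `Leₖ''(1) = (k-1)k(k+1)(k+2)/8`, the image `Q` has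
`Q(1) = 8/7 (1-α)`, `Q'(1) = -48/35 (1-α)` and `Q''(1) = 24/7 (1-α)`, so
`Q(1) Q''(1) - Q'(1)² = 2496/1225 (α-1)² > 0`: `Q` violates Laguerre's inequality at `1`.
-/

theorem hyperbolic_iff_splits {p : ℝ[X]} : Hyperbolic p ↔ p.Splits := by
  refine ⟨fun hp => ?_, fun hp z hz => ?_⟩
  · refine Splits.of_splits_map (algebraMap ℝ ℂ) (IsAlgClosed.splits _) fun z hz => ?_
    exact ⟨z.re, Complex.ext (by simp) (by simp [hp z hz])⟩
  · rw [hp.roots_map] at hz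
    obtain ⟨r, -, rfl⟩ := Multiset.mem_map.1 hz
    simp

noncomputable def laguerreDefect (t : ℝ) (p : ℝ[X]) : ℝ :=
  eval t p * eval t (derivative (derivative p)) - eval t (derivative p) ^ 2

def laguerreSubmonoid (t : ℝ) : Submonoid ℝ[X] where
  carrier := {p | laguerreDefect t p ≤ 0}
  one_mem' := by simp [laguerreDefect]
  mul_mem' {p q} hp hq := by
    simp only [Set.mem_ofPred_eq, laguerreDefect, derivative_mul, derivative_add, eval_add,
      eval_mul] at *
    nlinarith [mul_nonneg (sq_nonneg (eval t q)) (neg_nonneg.2 hp),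
      mul_nonneg (sq_nonneg (eval t p)) (neg_nonneg.2 hq)]

theorem Polynomial.Splits.mem_laguerreSubmonoid {p : ℝ[X]} (hp : p.Splits) (t : ℝ) :
    p ∈ laguerreSubmonoid t := by
  refine Submonoid.closure_le.2 ?_ hp
  rintro _ (⟨a, rfl⟩ | ⟨a, rfl⟩) <;> simp [laguerreSubmonoid, laguerreDefect]

theorem Hyperbolic.laguerreDefect_nonpos {p : ℝ[X]} (hp : Hyperbolic p) (t : ℝ) :
    laguerreDefect t p ≤ 0 :=
  (hyperbolic_iff_splits.1 hp).mem_laguerreSubmonoid t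

theorem legendre_zero : legendre 0 = 1 := by simp [legendre]

theorem legendre_one : legendre 1 = X := by
  apply Polynomial.funext; intro x
  simp [legendre]; ring

theorem legendre_two : legendre 2 = C (3 / 2) * X ^ 2 - C (1 / 2) := by
  have h : (X ^ 2 - 1 : ℝ[X]) ^ 2 = X ^ 4 - C 2 * X ^ 2 + 1 := by
    simp only [map_ofNat]; ring
  apply Polynomial.funext; intro x
  simp [legendre, h, iterate_derivative_C_mul, iterate_derivative_X_pow_eq_C_mul,
    Nat.descFactorial]
  ring

theorem legendre_three : legendre 3 = C (5 / 2) * X ^ 3 - C (3 / 2) * X := by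
  have h : (X ^ 2 - 1 : ℝ[X]) ^ 3 = X ^ 6 - C 3 * X ^ 4 + C 3 * X ^ 2 - 1 := by
    simp only [map_ofNat]; ring
  apply Polynomial.funext; intro x
  simp [legendre, h, iterate_derivative_C_mul, iterate_derivative_X_pow_eq_C_mul,
    Nat.descFactorial, Nat.factorial]
  ring

theorem legendre_four :
    legendre 4 = C (35 / 8) * X ^ 4 - C (15 / 4) * X ^ 2 + C (3 / 8) := by
  have h : (X ^ 2 - 1 : ℝ[X]) ^ 4 = X ^ 8 - C 4 * X ^ 6 + C 6 * X ^ 4 - C 4 * X ^ 2 + 1 := by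
    simp only [map_ofNat]; ring
  apply Polynomial.funext; intro x
  simp [legendre, h, iterate_derivative_C_mul, iterate_derivative_X_pow_eq_C_mul,
    Nat.descFactorial, Nat.factorial]
  ring

noncomputable def legendreCoeffXSubOnePowFour (k : ℕ) : ℝ :=
  [16 / 5, -32 / 5, 32 / 7, -8 / 5, 8 / 35].getD k 0

theorem sum_legendreCoeffXSubOnePowFour :
    ∑ k ∈ Finset.range 5, C (legendreCoeffXSubOnePowFour k) * legendre k = (X - C 1) ^ 4 := by
  apply Polynomial.funext; intro x
  simp [Finset.sum_range_succ, legendreCoeffXSubOnePowFour, legendre_zero, legendre_one,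
    legendre_two, legendre_three, legendre_four]
  ring

theorem laguerreDefect_one_quadraticMultiplier_legendreCoeffXSubOnePowFour (α β : ℝ) :
    laguerreDefect 1 (∑ k ∈ Finset.range 5,
      C (((k : ℝ) ^ 2 + α * k + β) * legendreCoeffXSubOnePowFour k) * legendre k) =
      2496 / 1225 * (α - 1) ^ 2 := by
  simp [laguerreDefect, Finset.sum_range_succ, legendreCoeffXSubOnePowFour, legendre_zero,
    legendre_one, legendre_two, legendre_three, legendre_four, derivative_pow]
  ring

theorem stmt_13 (α β : ℝ) (hα : α ≠ 1) :
    ¬ IsLegendreMS (fun k => (k : ℝ) ^ 2 + α * k + β) := by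
  intro h
  have hP : Hyperbolic
      (∑ k ∈ Finset.range 5, C (legendreCoeffXSubOnePowFour k) * legendre k) := by
    rw [sum_legendreCoeffXSubOnePowFour, hyperbolic_iff_splits]
    exact (Splits.X_sub_C 1).pow 4
  have hQ := (h 5 _ hP).laguerreDefect_nonpos 1
  rw [laguerreDefect_one_quadraticMultiplier_legendreCoeffXSubOnePowFour] at hQ
  linarith [sq_pos_of_ne_zero (sub_ne_zero.2 hα)]
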